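/- The generalized Coxeter rack operation x ▷ y = α(x - (2⟨x,y⟩/⟨y,y⟩)y) on T = {v ∈ V : ⟨v,v⟩ ∈ R*} is self-distributive: (x ▷ y) ▷ z = (x ▷ z) ▷ (y ▷ z) for all x, y, z ∈ T. -/
import Mathlib

theorem coxeter_self_distributive {R V : Type*} [CommRing R] [AddCommGroup V] [Module R V]
    (B : LinearMap.BilinForm R V) (hB : ∀ u v, B u v = B v u)
    (α : R) (hα : IsUnit α)
    (op : V → V → V)
    (hop : ∀ x y, op x y = α • (x - (2 * B x y * Ring.inverse (B y y)) • y))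
    (x y z : V)
    (hx : IsUnit (B x x)) (hy : IsUnit (B y y)) (hz : IsUnit (B z z)) :
    op (op x y) z = op (op x z) (op y z) := by
  have hzz : B z z * Ring.inverse (B z z) = 1 := Ring.mul_inverse_cancel _ hz
  have hyy : B y y * Ring.inverse (B y y) = 1 := Ring.mul_inverse_cancel _ hy
  have hαα : α * Ring.inverse α = 1 := Ring.mul_inverse_cancel _ hα
  have key : ∀ a b : V, B (op a z) (op b z) = α * α * B a b := by
    intro a b
    rw [hop, hop]
    simp only [map_smul, map_sub, LinearMap.smul_apply, LinearMap.sub_apply, smul_eq_mul]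
    rw [hB z b]
    linear_combination (4 * α * α * B a z * B b z * Ring.inverse (B z z)) * hzz
  have hinv : Ring.inverse (B (op y z) (op y z))
      = Ring.inverse α * Ring.inverse α * Ring.inverse (B y y) := by
    rw [key y y, Ring.mul_inverse_rev, Ring.mul_inverse_rev]
    ring
  rw [hop (op x y) z, hop (op x z) (op y z), key x y, hinv, hop x y, hop x z, hop y z]
  simp only [map_smul, map_sub, LinearMap.smul_apply, LinearMap.sub_apply, smul_eq_mul,
    smul_sub, smul_smul]
  match_scalars
  · ring
  · linear_combination (2 * B x y * Ring.inverse (B y y) * α * α * (α * Ring.inverse α + 1)) * hαα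
  · linear_combination (-(4 * B x y * Ring.inverse (B y y) * B y z * Ring.inverse (B z z) * α * α * (α * Ring.inverse α + 1))) * hαα
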